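/- arXiv:1205.1454 — 7 statements merged into one kernel-verified Lean document; each statement's English description precedes it below -/
import Mathlib

section
/- Let q be a prime power and p an odd prime not dividing q, let e be the multiplicative order of q modulo p, and let t be the largest integer such that p^t divides q^e − 1. Let b be a positive integer and j the largest integer such that p^j divides b. Let θ(b) denote the proportion of elements of the multiplicative group F_{q^{be}}^* that have exactly be Galois conjugates over F_q and multiplicative order divisible by p. Then 1 − 1/p^{t+j} − 3/q^{be/2} < θ(b) ≤ 1 − 1/p^{t+j}. -/
/-!
The elements counted by `θ(b)` are the `n`-th roots of unity of the algebraic closure of `F_q`,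
`n = q^{be} - 1`, that have degree `be` over `F_q` and order divisible by `p`. Lifting the exponent
gives `n = p^{t+j} c` with `p ∤ c`; the roots of unity of order prime to `p` are then exactly the
`c`-th roots of unity, so `n - c = n (1 - 1/p^{t+j})` of them have order divisible by `p`. Among
these, one of degree `d ≠ be` lies in `F_{q^d}` for a proper divisor `d ≤ be/2` of `be`, so at most
`∑_{d ≤ be/2} q^d ≤ 2 q^{be/2}` are lost, and `2 q^{be/2} / (q^{be} - 1) < 3 / q^{be/2}` since
`q^{be} ≥ 4`.
-/

/-- `θ b` is the proportion of elements of the multiplicative group of the subfield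
`F_{q^{be}}` of the algebraic closure of `F = F_q` (realised as the elements `ζ` with
`ζ^(q^{be}-1) = 1`) that have exactly `be` Galois conjugates over `F` and
multiplicative order divisible by `p`. -/
noncomputable def thetaGL (F : Type*) [Field F] [Fintype F] (q p e b : ℕ) : ℝ :=
  (Nat.card {ζ : AlgebraicClosure F //
      ζ ^ (q ^ (b * e) - 1) = 1 ∧ (minpoly F ζ).natDegree = b * e ∧ p ∣ orderOf ζ} : ℝ)
    / ((q : ℝ) ^ (b * e) - 1)

open Polynomial Finset

lemma Nat.sum_range_succ_pow_le_two_mul_pow {q : ℕ} (hq : 2 ≤ q) (m : ℕ) :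
    ∑ i ∈ range (m + 1), q ^ i ≤ 2 * q ^ m := by
  rw [sum_range_succ, two_mul]
  exact Nat.add_le_add_right (Nat.geomSum_lt hq fun _ hk ↦ mem_range.1 hk).le _

lemma Nat.exists_pow_sub_one_eq_pow_add_mul_not_dvd {p x b t j : ℕ} (hp : p.Prime)
    (hodd : Odd p) (hpx : p ∣ x - 1) (hx : ¬p ∣ x)
    (ht : p ^ t ∣ x - 1 ∧ ¬p ^ (t + 1) ∣ x - 1) (hj : p ^ j ∣ b ∧ ¬p ^ (j + 1) ∣ b) :
    ∃ c, x ^ b - 1 = p ^ (t + j) * c ∧ ¬p ∣ c := by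
  have h := Nat.emultiplicity_pow_sub_pow hp hodd (y := 1) hpx hx b
  rw [one_pow, emultiplicity_eq_coe.2 ht, emultiplicity_eq_coe.2 hj, ← Nat.cast_add] at h
  obtain ⟨⟨c, hc⟩, hndvd⟩ := emultiplicity_eq_coe.1 h
  refine ⟨c, hc, fun hpc ↦ hndvd ?_⟩
  rw [hc, pow_succ]
  exact mul_dvd_mul_left _ hpc

lemma ZMod.orderOf_natCast_pos {p q : ℕ} [Fact p.Prime] (hpq : ¬p ∣ q) :
    0 < orderOf (q : ZMod p) :=
  Nat.pos_of_dvd_of_pos (ZMod.orderOf_dvd_card_sub_one (by rwa [Ne, ZMod.natCast_eq_zero_iff]))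
    (Nat.sub_pos_of_lt (Fact.out : p.Prime).one_lt)

lemma ZMod.dvd_pow_orderOf_natCast_sub_one {p q : ℕ} (hq : 0 < q) :
    p ∣ q ^ orderOf (q : ZMod p) - 1 := by
  refine (Nat.modEq_iff_dvd' (Nat.one_le_pow _ _ hq)).1 ?_
  rw [← ZMod.natCast_eq_natCast_iff]
  push_cast
  rw [pow_orderOf_eq_one]

lemma not_dvd_orderOf_iff_pow_eq_one {M : Type*} [Monoid M] {p k c : ℕ} (hp : p.Prime)
    (hc : ¬p ∣ c) {x : M} (hx : x ^ (p ^ k * c) = 1) :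
    ¬p ∣ orderOf x ↔ x ^ c = 1 := by
  refine ⟨fun hpx ↦ ?_, fun hxc hpx ↦ hc (hpx.trans (orderOf_dvd_of_pow_eq_one hxc))⟩
  have hco : (orderOf x).Coprime (p ^ k) :=
    Nat.Coprime.pow_right _ (hp.coprime_iff_not_dvd.2 hpx).symm
  exact orderOf_dvd_iff_pow_eq_one.1 (hco.dvd_of_dvd_mul_left (orderOf_dvd_of_pow_eq_one hx))

lemma Polynomial.card_nthRootsFinset_le {R : Type*} [CommRing R] [IsDomain R] (n : ℕ) (a : R) :
    #(nthRootsFinset n a) ≤ n := by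
  classical
  rw [nthRootsFinset_def]
  exact (Multiset.toFinset_card_le _).trans (card_nthRoots n a)

lemma natCard_pow_eq_one_and_eq_card_filter {R : Type*} [CommRing R] [IsDomain R] {n : ℕ}
    (hn : 0 < n) (P : R → Prop) [DecidablePred P] :
    Nat.card {x : R // x ^ n = 1 ∧ P x} = #{x ∈ nthRootsFinset n (1 : R) | P x} := by
  rw [← Nat.card_eq_finsetCard]
  exact Nat.card_congr (Equiv.subtypeEquivRight fun x ↦ by rw [mem_filter, mem_nthRootsFinset hn])

section SepClosed

variable {K : Type*} [Field K] [IsSepClosed K]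

lemma card_nthRootsFinset_one_of_isSepClosed (n : ℕ) [NeZero (n : K)] :
    #(nthRootsFinset n (1 : K)) = n :=
  (HasEnoughRootsOfUnity.exists_primitiveRoot K n).choose_spec.card_nthRootsFinset

lemma card_filter_dvd_orderOf_nthRootsFinset {p k c : ℕ} (hp : p.Prime) (hc : ¬p ∣ c)
    [NeZero ((p ^ k * c : ℕ) : K)] :
    #{ζ ∈ nthRootsFinset (p ^ k * c) (1 : K) | p ∣ orderOf ζ} = p ^ k * c - c := by
  have : NeZero (c : K) := ⟨fun h ↦ NeZero.ne ((p ^ k * c : ℕ) : K) (by push_cast; simp [h])⟩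
  have hn : 0 < p ^ k * c := Nat.pos_of_ne_zero (NeZero.of_neZero_natCast K).out
  have hc0 : 0 < c := Nat.pos_of_ne_zero (NeZero.of_neZero_natCast K).out
  have hcompl : {ζ ∈ nthRootsFinset (p ^ k * c) (1 : K) | ¬p ∣ orderOf ζ} =
      nthRootsFinset c (1 : K) := by
    ext ζ
    simp only [mem_filter, mem_nthRootsFinset hn, mem_nthRootsFinset hc0]
    refine ⟨fun ⟨hζ, hpζ⟩ ↦ (not_dvd_orderOf_iff_pow_eq_one hp hc hζ).1 hpζ, fun hζ ↦ ?_⟩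
    have hζ' : ζ ^ (p ^ k * c) = 1 := by rw [pow_mul', hζ, one_pow]
    exact ⟨hζ', (not_dvd_orderOf_iff_pow_eq_one hp hc hζ').2 hζ⟩
  have hsplit := card_filter_add_card_filter_not (s := nthRootsFinset (p ^ k * c) (1 : K))
    (p := fun ζ ↦ p ∣ orderOf ζ)
  rw [hcompl, card_nthRootsFinset_one_of_isSepClosed,
    card_nthRootsFinset_one_of_isSepClosed] at hsplit
  omega

end SepClosed

section FiniteField

variable {F K : Type*} [Field F] [Finite F] [Field K] [Algebra F K]

lemma minpoly_natDegree_dvd_iff_pow_eq_one {ζ : K} (hζ : IsIntegral F ζ) (hζ0 : ζ ≠ 0)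
    {m : ℕ} : (minpoly F ζ).natDegree ∣ m ↔ ζ ^ (Nat.card F ^ m - 1) = 1 := by
  have hq : 1 ≤ Nat.card F ^ m := Nat.one_le_pow _ _ Nat.card_pos
  rw [(minpoly.irreducible hζ).natDegree_dvd_iff_dvd_X_pow_card_pow_sub_X, minpoly.dvd_iff]
  simp only [map_sub, map_pow, aeval_X, sub_eq_zero]
  conv_lhs => rw [← Nat.sub_add_cancel hq, pow_succ]
  exact ⟨fun h ↦ mul_right_cancel₀ hζ0 (h.trans (one_mul ζ).symm), fun h ↦ by rw [h, one_mul]⟩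

lemma natCast_card_pow_sub_one_ne_zero {N : ℕ} (hN : N ≠ 0) :
    ((Nat.card F ^ N - 1 : ℕ) : K) ≠ 0 := by
  have hq : (Nat.card F : K) = 0 := by
    have := Fintype.ofFinite F
    rw [← Fintype.card_eq_nat_card, ← map_natCast (algebraMap F K), FiniteField.cast_card_eq_zero,
      map_zero]
  rw [Nat.cast_sub (Nat.one_le_pow _ _ Nat.card_pos), Nat.cast_pow, hq, zero_pow hN]
  simp

variable [Algebra.IsAlgebraic F K] [DecidableEq K]

lemma card_filter_natDegree_ne_le (N : ℕ) :
    #{ζ ∈ nthRootsFinset (Nat.card F ^ N - 1) (1 : K) | (minpoly F ζ).natDegree ≠ N} ≤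
      2 * Nat.card F ^ (N / 2) := by
  set q := Nat.card F
  have hq : 2 ≤ q := Finite.one_lt_card
  have hsub : {ζ ∈ nthRootsFinset (q ^ N - 1) (1 : K) | (minpoly F ζ).natDegree ≠ N} ⊆
      (range (N / 2 + 1)).biUnion fun d ↦ nthRootsFinset (q ^ d - 1) (1 : K) := by
    intro ζ hζ
    obtain ⟨hroot, hdeg⟩ := mem_filter.1 hζ
    have hn : 0 < q ^ N - 1 :=
      Nat.pos_of_ne_zero fun h ↦ by simp [h, nthRootsFinset_zero] at hroot
    have hζ0 : ζ ≠ 0 := by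
      rintro rfl
      simp [mem_nthRootsFinset hn, zero_pow hn.ne'] at hroot
    have hint : IsIntegral F ζ := Algebra.IsIntegral.isIntegral ζ
    obtain ⟨c, hc⟩ := (minpoly_natDegree_dvd_iff_pow_eq_one hint hζ0).2
      ((mem_nthRootsFinset hn _).1 hroot)
    have hc2 : 2 ≤ c := by
      rcases c with _ | _ | c
      · simp [hc] at hn
      · simp [hc] at hdeg
      · omega
    refine mem_biUnion.2 ⟨(minpoly F ζ).natDegree, mem_range.2 ?_, (mem_nthRootsFinset ?_ _).2
      ((minpoly_natDegree_dvd_iff_pow_eq_one hint hζ0).1 dvd_rfl)⟩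
    · rw [hc, Nat.lt_succ_iff, Nat.le_div_iff_mul_le two_pos]
      exact Nat.mul_le_mul_left _ hc2
    · exact Nat.sub_pos_of_lt (Nat.one_lt_pow (minpoly.natDegree_pos hint).ne' hq)
  calc _ ≤ _ := card_le_card hsub
    _ ≤ ∑ d ∈ range (N / 2 + 1), #(nthRootsFinset (q ^ d - 1) (1 : K)) := card_biUnion_le
    _ ≤ ∑ d ∈ range (N / 2 + 1), q ^ d :=
      sum_le_sum fun d _ ↦ (card_nthRootsFinset_le _ _).trans (Nat.sub_le _ _)
    _ ≤ 2 * q ^ (N / 2) := Nat.sum_range_succ_pow_le_two_mul_pow hq _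

lemma card_filter_natDegree_eq_and_dvd_orderOf_bounds [IsSepClosed K] {p v c N : ℕ}
    (hp : p.Prime) (hc : ¬p ∣ c) (hN : N ≠ 0) (hn : Nat.card F ^ N - 1 = p ^ v * c) :
    #{ζ ∈ nthRootsFinset (Nat.card F ^ N - 1) (1 : K) |
        (minpoly F ζ).natDegree = N ∧ p ∣ orderOf ζ} ≤ p ^ v * c - c ∧
      p ^ v * c - c ≤ #{ζ ∈ nthRootsFinset (Nat.card F ^ N - 1) (1 : K) |
        (minpoly F ζ).natDegree = N ∧ p ∣ orderOf ζ} + 2 * Nat.card F ^ (N / 2) := by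
  have : NeZero ((p ^ v * c : ℕ) : K) := ⟨hn ▸ natCast_card_pow_sub_one_ne_zero hN⟩
  have hP := card_filter_dvd_orderOf_nthRootsFinset (K := K) (k := v) hp hc
  have hbad := card_filter_natDegree_ne_le (F := F) (K := K) N
  rw [hn] at hbad ⊢
  rw [← hP]
  constructor
  · refine card_le_card fun ζ hζ ↦ ?_
    simp only [mem_filter] at hζ ⊢
    exact ⟨hζ.1, hζ.2.2⟩
  · refine (card_le_card fun ζ hζ ↦ ?_).trans ((card_union_le _ _).trans (by gcongr))
    simp only [mem_filter, mem_union] at hζ ⊢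
    tauto

end FiniteField

lemma Real.pow_div_two_le_rpow {x : ℝ} (hx : 1 ≤ x) (N : ℕ) :
    x ^ (N / 2) ≤ x ^ ((N : ℝ) / 2) := by
  rw [← Real.rpow_natCast]
  exact Real.rpow_le_rpow_of_exponent_le hx (by exact_mod_cast Nat.cast_div_le (m := N) (n := 2))

lemma Real.rpow_div_two_sq {x : ℝ} (hx : 0 ≤ x) (N : ℕ) : (x ^ ((N : ℝ) / 2)) ^ 2 = x ^ N := by
  rw [← Real.rpow_natCast _ 2, ← Real.rpow_mul hx, ← Real.rpow_natCast]
  norm_num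

lemma bounds_div_sq_sub_one {g P c y : ℝ} (hP : 0 < P) (hy : 2 ≤ y) (hn : P * c = y ^ 2 - 1)
    (hup : g ≤ P * c - c) (hlow : P * c - c ≤ g + 2 * y) :
    1 - 1 / P - 3 / y < g / (y ^ 2 - 1) ∧ g / (y ^ 2 - 1) ≤ 1 - 1 / P := by
  have hn0 : 0 < y ^ 2 - 1 := by nlinarith
  have hc : 0 < c := pos_of_mul_pos_right (hn ▸ hn0) hP.le
  have hfrac : (P * c - c) / (y ^ 2 - 1) = 1 - 1 / P := by
    rw [← hn]
    field_simp
  have herr : 2 * y / (y ^ 2 - 1) < 3 / y := by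
    rw [div_lt_div_iff₀ hn0 (by linarith)]
    nlinarith
  constructor
  · calc 1 - 1 / P - 3 / y < (P * c - c) / (y ^ 2 - 1) - 2 * y / (y ^ 2 - 1) := by
          rw [hfrac]; linarith
      _ = (P * c - c - 2 * y) / (y ^ 2 - 1) := by ring
      _ ≤ g / (y ^ 2 - 1) := by gcongr; linarith
  · rw [← hfrac]
    gcongr

lemma bounds_div_pow_sub_one_of_card_bounds {q N P c g : ℕ} (hq : 4 ≤ q ^ N) (hP : 0 < P)
    (hn : q ^ N - 1 = P * c) (hup : g ≤ P * c - c) (hlow : P * c - c ≤ g + 2 * q ^ (N / 2)) :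
    1 - 1 / (P : ℝ) - 3 / (q : ℝ) ^ ((N : ℝ) / 2) < g / ((q : ℝ) ^ N - 1) ∧
      g / ((q : ℝ) ^ N - 1) ≤ 1 - 1 / (P : ℝ) := by
  have hq1 : (1 : ℝ) ≤ q := by
    rcases Nat.eq_zero_or_pos N with rfl | hN
    · simp at hq
    · exact_mod_cast Nat.one_le_iff_ne_zero.2 fun h ↦ by simp [h, hN.ne'] at hq
  have hy : ((q : ℝ) ^ ((N : ℝ) / 2)) ^ 2 = (q : ℝ) ^ N := Real.rpow_div_two_sq (by linarith) N
  have hy2 : 2 ≤ (q : ℝ) ^ ((N : ℝ) / 2) := by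
    have h4 : (4 : ℝ) ≤ (q : ℝ) ^ N := by exact_mod_cast hq
    nlinarith [Real.rpow_nonneg (Nat.cast_nonneg q) ((N : ℝ) / 2)]
  have hcle : c ≤ P * c := Nat.le_mul_of_pos_left c hP
  rw [← hy]
  refine bounds_div_sq_sub_one (P := P) (c := c) (by positivity) hy2 ?_ ?_ ?_
  · rw [hy, ← Nat.cast_pow, ← Nat.cast_mul, ← hn, Nat.cast_sub (by omega)]
    push_cast
    ring
  · rw [← Nat.cast_mul, ← Nat.cast_sub hcle]
    exact_mod_cast hup
  · rw [← Nat.cast_mul, ← Nat.cast_sub hcle]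
    refine (Nat.cast_le.2 hlow).trans ?_
    push_cast
    gcongr
    exact Real.pow_div_two_le_rpow hq1 N

theorem theta_bounds
    (F : Type) [Field F] [Fintype F] (q p e t b j : ℕ)
    (hq : q = Fintype.card F)
    (hp : p.Prime) (hodd : Odd p) (hpq : ¬ p ∣ q)
    (he : e = orderOf (q : ZMod p))
    (ht : p ^ t ∣ q ^ e - 1 ∧ ¬ p ^ (t + 1) ∣ q ^ e - 1)
    (hb : 0 < b)
    (hj : p ^ j ∣ b ∧ ¬ p ^ (j + 1) ∣ b) :
    1 - 1 / (p : ℝ) ^ (t + j) - 3 / (q : ℝ) ^ ((b * e : ℝ) / 2) < thetaGL F q p e b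
    ∧ thetaGL F q p e b ≤ 1 - 1 / (p : ℝ) ^ (t + j) := by
  classical
  have := Fact.mk hp
  obtain rfl : q = Nat.card F := hq.trans Fintype.card_eq_nat_card
  have hq2 : 2 ≤ Nat.card F := Finite.one_lt_card
  have he0 : 0 < e := he ▸ ZMod.orderOf_natCast_pos hpq
  have hpe : p ∣ Nat.card F ^ e - 1 := he ▸ ZMod.dvd_pow_orderOf_natCast_sub_one (by omega)
  have hqe : 4 ≤ Nat.card F ^ (b * e) := by
    have hp3 : 3 ≤ p := by have := hp.two_le; rcases hodd with ⟨k, rfl⟩; omega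
    have := Nat.le_of_dvd (Nat.sub_pos_of_lt (Nat.one_lt_pow he0.ne' hq2)) hpe
    have := Nat.pow_le_pow_right (by omega : 1 ≤ Nat.card F) (Nat.le_mul_of_pos_left e hb)
    omega
  obtain ⟨c, hn, hc⟩ := Nat.exists_pow_sub_one_eq_pow_add_mul_not_dvd hp hodd hpe
    (fun h ↦ hpq (hp.dvd_of_dvd_pow h)) ht hj
  rw [← pow_mul, mul_comm] at hn
  obtain ⟨hup, hlow⟩ := card_filter_natDegree_eq_and_dvd_orderOf_bounds
    (K := AlgebraicClosure F) hp hc (by positivity) hn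
  rw [thetaGL, natCard_pow_eq_one_and_eq_card_filter (by omega)]
  exact_mod_cast bounds_div_pow_sub_one_of_card_bounds hqe (pow_pos hp.pos _) hn hup hlow
end

section
/- Let q be a prime power, ℓ an integer with ℓ ≥ 2, and F_{q^ℓ} the finite field with q^ℓ elements containing F_q as a subfield. Let ζ be a nonzero element of F_{q^ℓ} such that ζ^{q^i} = ζ^{−1} for some nonnegative integer i (i.e., ζ is Galois conjugate to ζ^{−1} over F_q). Then either ζ lies in a proper subfield of F_{q^ℓ} containing F_q (equivalently, ζ^{q^k} = ζ for some divisor k of ℓ with k < ℓ), or ℓ is even and ζ^{q^{ℓ/2}+1} = 1 (i.e., ζ lies in the cyclic subgroup of F_{q^ℓ}^* of order q^{ℓ/2} + 1). -/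
theorem galois_conjugate_to_inverse (K : Type) [Field K] [Fintype K]
    (q ℓ : ℕ) (hq : IsPrimePow q) (hℓ : 2 ≤ ℓ)
    (hK : Fintype.card K = q ^ ℓ)
    (ζ : K) (hζ : ζ ≠ 0) (i : ℕ) (hi : ζ ^ q ^ i = ζ⁻¹) :
    (∃ k, k ∣ ℓ ∧ k < ℓ ∧ ζ ^ q ^ k = ζ) ∨ (Even ℓ ∧ ζ ^ (q ^ (ℓ / 2) + 1) = 1) := by
  classical
  have hq2 : 2 ≤ q := hq.two_le
  have hℓ0 : 0 < ℓ := by omega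
  set u : Kˣ := Units.mk0 ζ hζ with hu
  set d := orderOf u with hdef
  have hdpos : 0 < d := orderOf_pos u
  haveI : NeZero d := ⟨hdpos.ne'⟩
  -- d ∣ q^ℓ - 1
  have hcard : Fintype.card Kˣ = q ^ ℓ - 1 := by
    rw [Fintype.card_units, hK]
  have hd1 : d ∣ q ^ ℓ - 1 := hcard ▸ orderOf_dvd_card
  -- d ∣ q^i + 1
  have hui : u ^ (q ^ i + 1) = 1 := by
    ext
    simp only [Units.val_pow_eq_pow_val, Units.val_one, hu, Units.val_mk0]
    rw [pow_succ, hi, inv_mul_cancel₀ hζ]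
  have hd2 : d ∣ q ^ i + 1 := orderOf_dvd_of_pow_eq_one hui
  -- work in ZMod d
  set x : ZMod d := (q : ZMod d) with hx
  have hqℓ1 : 1 ≤ q ^ ℓ := Nat.one_le_pow _ _ (by omega)
  have hxl : x ^ ℓ = 1 := by
    have h1 : (q : ℕ) ^ ℓ ≡ 1 [MOD d] := ((Nat.modEq_iff_dvd' hqℓ1).mpr hd1).symm
    have h2 := (ZMod.natCast_eq_natCast_iff _ _ _).mpr h1
    push_cast at h2
    simpa [hx] using h2
  have hxi : x ^ i = -1 := by
    have h1 : ((q ^ i + 1 : ℕ) : ZMod d) = 0 :=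
      (ZMod.natCast_eq_zero_iff _ _).mpr hd2
    push_cast at h1
    rw [hx]
    linear_combination h1
  set e := orderOf x with hedef
  have hfin : IsOfFinOrder x := isOfFinOrder_iff_pow_eq_one.mpr ⟨ℓ, hℓ0, hxl⟩
  have heℓ : e ∣ ℓ := orderOf_dvd_of_pow_eq_one hxl
  have hepos : 0 < e := hfin.orderOf_pos
  rcases lt_or_eq_of_le (Nat.le_of_dvd hℓ0 heℓ) with hlt | heq
  · -- small case: ζ lies in subfield
    left
    refine ⟨e, heℓ, hlt, ?_⟩
    have hqe1 : 1 ≤ q ^ e := Nat.one_le_pow _ _ (by omega)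
    have hxe : x ^ e = 1 := pow_orderOf_eq_one x
    have h1 : (q : ℕ) ^ e ≡ 1 [MOD d] := by
      rw [← ZMod.natCast_eq_natCast_iff]
      push_cast
      simpa [hx] using hxe
    have hdqe : d ∣ q ^ e - 1 := (Nat.modEq_iff_dvd' hqe1).mp h1.symm
    have hu1 : u ^ (q ^ e - 1) = 1 := orderOf_dvd_iff_pow_eq_one.mp hdqe
    have h2 : u ^ (q ^ e) = u := by
      have h : q ^ e = (q ^ e - 1) + 1 := by omega
      rw [h, pow_succ, hu1, one_mul]
    have := congrArg Units.val h2
    simpa [hu] using this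
  · -- e = ℓ
    -- first show ¬ ℓ ∣ i
    have hnot : ¬ ℓ ∣ i := by
      intro hdvd
      have hx1 : x ^ i = 1 := by
        obtain ⟨c, rfl⟩ := hdvd
        rw [pow_mul, hxl, one_pow]
      have hneg : (-1 : ZMod d) = 1 := by rw [← hxi, hx1]
      have hd2' : d ∣ 2 := by
        have h2 : ((2 : ℕ) : ZMod d) = 0 := by push_cast; linear_combination -hneg
        exact (ZMod.natCast_eq_zero_iff _ _).mp h2
      have hdq1 : d ∣ q - 1 := by
        rcases Nat.even_or_odd q with hqe | hqo
        · -- q even: q^ℓ - 1 odd, so d = 1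
          have h2ql : 2 ∣ q ^ ℓ := dvd_pow (even_iff_two_dvd.mp hqe) hℓ0.ne'
          have hd1'' : d = 1 := by
            rcases (Nat.dvd_prime Nat.prime_two).mp hd2' with h | h
            · exact h
            · exfalso; rw [h] at hd1; omega
          rw [hd1'']; exact one_dvd _
        · have h21 : 2 ∣ q - 1 := by rcases hqo with ⟨c, hc⟩; omega
          exact hd2'.trans h21
      have hxone : x = 1 := by
        have h1 : (q : ℕ) ≡ 1 [MOD d] :=
          ((Nat.modEq_iff_dvd' (by omega)).mpr hdq1).symm
        have h2 := (ZMod.natCast_eq_natCast_iff _ _ _).mpr h1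
        simpa [hx] using h2
      have : e = 1 := by rw [hedef, hxone, orderOf_one]
      omega
    -- ℓ ∣ 2 i
    have hl2i : ℓ ∣ 2 * i := by
      have hx2i : x ^ (2 * i) = 1 := by
        rw [two_mul, pow_add, hxi]; ring
      have h := orderOf_dvd_of_pow_eq_one hx2i
      rwa [← hedef, heq] at h
    -- ℓ even
    have hleven : Even ℓ := by
      by_contra hodd
      rw [Nat.not_even_iff_odd] at hodd
      have hcop : Nat.Coprime ℓ 2 := Nat.coprime_two_right.mpr hodd
      exact hnot (hcop.dvd_of_dvd_mul_left hl2i)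
    obtain ⟨h, hh⟩ := hleven
    have hℓ2h : ℓ = 2 * h := by omega
    obtain ⟨c, hc⟩ := hl2i
    have hic : i = h * c := by
      have h2 : 2 * i = 2 * (h * c) := by rw [hc, hℓ2h]; ring
      exact Nat.eq_of_mul_eq_mul_left (by norm_num) h2
    have hcodd : Odd c := by
      rcases Nat.even_or_odd c with ⟨c', hc'⟩ | hco
      · exact absurd ⟨c', by rw [hic, hc', hℓ2h]; ring⟩ hnot
      · exact hco
    -- x^h = -1
    have hy2 : (x ^ h) ^ 2 = 1 := by
      rw [← pow_mul]
      have hh2 : h * 2 = ℓ := by omega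
      rw [hh2, hxl]
    have hyh : x ^ h = -1 := by
      rcases hcodd with ⟨k, hk⟩
      have h1 : x ^ i = (x ^ h) ^ (2 * k + 1) := by
        rw [← pow_mul]; congr 1; rw [hic, hk]
      have h2 : (x ^ h) ^ (2 * k + 1) = x ^ h := by
        rw [pow_add, pow_mul, hy2, one_pow, pow_one, one_mul]
      have h3 := hxi
      rw [h1, h2] at h3
      exact h3
    have hdqh : d ∣ q ^ h + 1 := by
      have h1 : ((q ^ h + 1 : ℕ) : ZMod d) = 0 := by
        push_cast
        rw [← hx] at *
        rw [hyh]; ring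
      exact (ZMod.natCast_eq_zero_iff _ _).mp h1
    have huh : u ^ (q ^ h + 1) = 1 := orderOf_dvd_iff_pow_eq_one.mp hdqh
    right
    refine ⟨⟨h, hh⟩, ?_⟩
    have hhalf : ℓ / 2 = h := by omega
    rw [hhalf]
    have := congrArg Units.val huh
    simpa [hu] using this
end

section
/- Let q be a prime power, ℓ an odd positive integer, and F_{q^{2ℓ}} the finite field with q^{2ℓ} elements containing F_{q^2} as a subfield. Then the number of elements ζ of the cyclic subgroup of order q^ℓ + 1 of the multiplicative group F_{q^{2ℓ}}^* (i.e., elements with ζ^{q^ℓ+1} = 1) that have exactly ℓ Galois conjugates over F_{q^2} is greater than (1 − 3/q^{ℓ/2})·(q^ℓ + 1). -/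
/-!
If `ζ ^ (q ^ ℓ + 1) = 1` and the minimal polynomial of ζ over `F_{q^2}` has degree `d`, then `d ∣ ℓ`
and `ζ ^ q ^ (2 * d) = ζ`; since `ℓ / d` is odd this gives `ζ ^ q ^ ℓ = ζ ^ q ^ d`, hence
`ζ ^ (q ^ d + 1) = 1`. So the elements of degree `< ℓ` lie in the union of the groups of order
`q ^ d + 1` over `1 ≤ d ≤ ℓ / 2`, which has at most `∑ (q ^ d + 1) ≤ 3 q ^ ⌊ℓ / 2⌋` elements,
while the whole group has `q ^ ℓ + 1` elements.
-/

open Polynomial Finset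

theorem pow_pow_eq_self_of_pow_eq_self {M : Type*} [Monoid M] {x : M} {b : ℕ} (h : x ^ b = x)
    (m : ℕ) : x ^ b ^ m = x := by
  induction m with
  | zero => simp
  | succ m ih => rw [pow_succ, pow_mul, ih, h]

theorem pow_add_one_eq_one_of_pow_sq_eq_self {M : Type*} [Monoid M] {x : M} {a k : ℕ}
    (hfix : x ^ a ^ 2 = x) (hk : Odd k) (h : x ^ (a ^ k + 1) = 1) : x ^ (a + 1) = 1 := by
  obtain ⟨m, rfl⟩ := hk
  have hodd : x ^ a ^ (2 * m + 1) = x ^ a := by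
    rw [pow_succ, pow_mul, pow_mul, pow_pow_eq_self_of_pow_eq_self hfix]
  rwa [pow_succ, ← hodd, ← pow_succ]

theorem FiniteField.pow_card_pow_natDegree_minpoly (F : Type*) {K : Type*} [Field F] [Finite F]
    [Field K] [Algebra F K] {x : K} (hx : IsIntegral F x) :
    x ^ Nat.card F ^ (minpoly F x).natDegree = x := by
  have hdvd := ((minpoly.irreducible hx).natDegree_dvd_iff_dvd_X_pow_card_pow_sub_X).mp dvd_rfl
  have := aeval_eq_zero_of_dvd_aeval_eq_zero hdvd (minpoly.aeval F x)
  simpa [sub_eq_zero] using this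

theorem FiniteField.card_nthRootsFinset_one_of_dvd {K : Type*} [Field K] [Fintype K] {n : ℕ}
    (hn : n ∣ Fintype.card K - 1) : #(nthRootsFinset n (1 : K)) = n := by
  classical
  obtain ⟨g, hg⟩ := IsCyclic.exists_ofOrder_eq_natCard (α := Kˣ)
  rw [Nat.card_eq_fintype_card, Fintype.card_units] at hg
  have hgen : IsPrimitiveRoot ((g ^ (orderOf g / n) : Kˣ) : K) n := by
    have hord : orderOf (g ^ (orderOf g / n)) = n :=
      orderOf_pow_orderOf_div (orderOf_pos g).ne' (hg ▸ hn)
    have hprim := IsPrimitiveRoot.orderOf (g ^ (orderOf g / n))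
    rw [hord] at hprim
    exact IsPrimitiveRoot.coe_units_iff.mpr hprim
  exact hgen.card_nthRootsFinset

theorem Nat.le_div_two_of_dvd_of_ne {d n : ℕ} (hn : n ≠ 0) (hdvd : d ∣ n) (hne : d ≠ n) :
    d ≤ n / 2 := by
  obtain ⟨k, rfl⟩ := hdvd
  rcases k with _ | _ | k
  · simp at hn
  · simp at hne
  · rw [Nat.le_div_iff_mul_le two_pos]; nlinarith

theorem sum_Icc_pow_add_one_le {q : ℕ} (hq : 2 ≤ q) (m : ℕ) :
    ∑ d ∈ Icc 1 m, (q ^ d + 1) ≤ 3 * q ^ m := by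
  induction m with
  | zero => simp
  | succ m ih =>
    rw [sum_Icc_succ_top (by omega)]
    have : 2 * q ^ m ≤ q ^ (m + 1) := by rw [pow_succ']; exact Nat.mul_le_mul_right _ hq
    have := Nat.one_le_pow m q (by omega)
    omega

theorem pow_pow_natDegree_minpoly_add_one_eq_one {F K : Type*} [Field F] [Finite F] [Field K]
    [Algebra F K] [FiniteDimensional F K] {q : ℕ} (hq : Nat.card F = q ^ 2)
    (hodd : Odd (Module.finrank F K)) {ζ : K} (hζ : ζ ^ (q ^ Module.finrank F K + 1) = 1) :
    ζ ^ (q ^ (minpoly F ζ).natDegree + 1) = 1 := by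
  have hx := IsIntegral.of_finite F ζ
  obtain ⟨k, hk⟩ := minpoly.degree_dvd hx
  refine pow_add_one_eq_one_of_pow_sq_eq_self ?_ (Nat.odd_mul.mp (hk ▸ hodd)).2 (k := k) ?_
  · rw [← pow_mul, mul_comm, pow_mul, ← hq]
    exact FiniteField.pow_card_pow_natDegree_minpoly F hx
  · rwa [← pow_mul, ← hk]

theorem card_nthRootsFinset_le_card_natDegree_minpoly_eq_add {F K : Type*} [Field F] [Finite F]
    [Field K] [Fintype K] [DecidableEq K] [Algebra F K] {q : ℕ} (hq : Nat.card F = q ^ 2)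
    (hodd : Odd (Module.finrank F K)) :
    #(nthRootsFinset (q ^ Module.finrank F K + 1) (1 : K)) ≤
      #({ζ | ζ ^ (q ^ Module.finrank F K + 1) = 1 ∧
          (minpoly F ζ).natDegree = Module.finrank F K} : Finset K) +
        ∑ d ∈ Icc 1 (Module.finrank F K / 2), (q ^ d + 1) := by
  set ℓ := Module.finrank F K
  have hsub : nthRootsFinset (q ^ ℓ + 1) (1 : K) ⊆
      ({ζ | ζ ^ (q ^ ℓ + 1) = 1 ∧ (minpoly F ζ).natDegree = ℓ} : Finset K) ∪
        (Icc 1 (ℓ / 2)).biUnion fun d ↦ nthRootsFinset (q ^ d + 1) (1 : K) := by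
    intro ζ hζ
    rw [mem_nthRootsFinset (by omega)] at hζ
    by_cases hdeg : (minpoly F ζ).natDegree = ℓ
    · exact mem_union_left _ (mem_filter.mpr ⟨mem_univ _, hζ, hdeg⟩)
    · have hx := IsIntegral.of_finite F ζ
      refine mem_union_right _ (mem_biUnion.mpr ⟨_, mem_Icc.mpr ⟨minpoly.natDegree_pos hx,
        Nat.le_div_two_of_dvd_of_ne Module.finrank_pos.ne' (minpoly.degree_dvd hx) hdeg⟩, ?_⟩)
      exact (mem_nthRootsFinset (by omega) _).mpr
        (pow_pow_natDegree_minpoly_add_one_eq_one hq hodd hζ)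
  calc _ ≤ _ := card_le_card hsub
    _ ≤ _ := card_union_le _ _
    _ ≤ _ := by
      gcongr
      refine card_biUnion_le.trans (sum_le_sum fun d _ ↦ ?_)
      rw [nthRootsFinset_def]
      exact (Multiset.toFinset_card_le _).trans (card_nthRoots _ _)

theorem one_sub_three_div_rpow_half_mul_lt {q ℓ N : ℕ} (hq : 1 ≤ q)
    (h : q ^ ℓ + 1 ≤ N + 3 * q ^ (ℓ / 2)) :
    (1 - 3 / (q : ℝ) ^ ((ℓ : ℝ) / 2)) * ((q : ℝ) ^ ℓ + 1) < N := by
  set Q : ℝ := (q : ℝ) ^ ((ℓ : ℝ) / 2)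
  have hQ : 0 < Q := by positivity
  have hQsq : Q ^ 2 = (q : ℝ) ^ ℓ := by
    rw [← Real.rpow_natCast Q, ← Real.rpow_mul (Nat.cast_nonneg q)]
    norm_num
  have hfloor : (q : ℝ) ^ (ℓ / 2) ≤ Q := by
    rw [← Real.rpow_natCast]
    exact Real.rpow_le_rpow_of_exponent_le (by exact_mod_cast hq) Nat.cast_div_le
  have hcast : (q : ℝ) ^ ℓ + 1 ≤ N + 3 * (q : ℝ) ^ (ℓ / 2) := by exact_mod_cast h
  have hexpand : (1 - 3 / Q) * ((q : ℝ) ^ ℓ + 1) = Q ^ 2 + 1 - 3 * Q - 3 / Q := by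
    rw [← hQsq]
    field_simp
    ring
  have : 0 < 3 / Q := by positivity
  linarith

theorem count_degree_ell_elements_in_cyclic_subgroup_over_q_sq
    (F2 K : Type) [Field F2] [Fintype F2]
    [Field K] [Fintype K] [Algebra F2 K] (q ℓ : ℕ)
    (hq : Fintype.card F2 = q ^ 2) (hℓ : Odd ℓ)
    (hK : Fintype.card K = q ^ (2 * ℓ)) :
    (1 - 3 / (q : ℝ) ^ ((ℓ : ℝ) / 2)) * ((q : ℝ) ^ ℓ + 1)
      < (Nat.card {ζ : K // ζ ^ (q ^ ℓ + 1) = 1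
          ∧ (minpoly F2 ζ).natDegree = ℓ} : ℝ) := by
  classical
  have hq2 : 2 ≤ q := (Nat.one_lt_pow_iff two_ne_zero).mp (hq ▸ Fintype.one_lt_card)
  have hrank : Module.finrank F2 K = ℓ := by
    rw [Module.card_eq_pow_finrank (K := F2), hq, ← pow_mul] at hK
    have := Nat.pow_right_injective hq2 hK
    omega
  have hroots : #(nthRootsFinset (q ^ ℓ + 1) (1 : K)) = q ^ ℓ + 1 := by
    refine FiniteField.card_nthRootsFinset_one_of_dvd (Dvd.intro (q ^ ℓ - 1) ?_)
    rw [hK, pow_mul']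
    simpa using (Nat.sq_sub_sq (q ^ ℓ) 1).symm
  have hcount : q ^ ℓ + 1 ≤ Nat.card {ζ : K // ζ ^ (q ^ ℓ + 1) = 1
      ∧ (minpoly F2 ζ).natDegree = ℓ} + 3 * q ^ (ℓ / 2) := by
    have := card_nthRootsFinset_le_card_natDegree_minpoly_eq_add (K := K)
      (Nat.card_eq_fintype_card.trans hq) (hrank ▸ hℓ)
    rw [hrank, hroots] at this
    rw [Nat.card_eq_fintype_card, Fintype.card_subtype]
    linarith [sum_Icc_pow_add_one_le hq2 (ℓ / 2)]
  exact one_sub_three_div_rpow_half_mul_lt (one_le_two.trans hq2) hcount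
end

section
/- Let ℓ be a real number and r an integer with 1 ≤ r ≤ ℓ, and define P(ℓ,r) = Σ 1/b, the sum over all integers b with ℓ/2 < b ≤ ℓ and r dividing b. Then |P(ℓ,r) − ln(2)/r| ≤ 1/ℓ. -/
/-!
Writing `b = r k`, the sum is `(H n - H (n / 2)) / r` with `n = ⌊ℓ / r⌋₊`, and `ℓ < (n + 1) r`.
Monotonicity of the two sequences `H n - log (n + 1)` and `H n - log n` that squeeze Euler's
constant gives `H (2m) - H m ≤ log 2 ≤ H (2m + 1) - H m`; for either parity of `n` the block
`H n - H (n / 2)` differs from one of these by a single term of size at most `1 / (n + 1)`.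
-/

open Finset Real

lemma log_sub_log_le_harmonic_sub_harmonic {m n : ℕ} (hmn : m ≤ n) :
    log (n + 1) - log (m + 1) ≤ harmonic n - harmonic m := by
  have := strictMono_eulerMascheroniSeq.monotone hmn
  simp only [eulerMascheroniSeq] at this
  linarith

lemma harmonic_sub_harmonic_le_log_sub_log {m n : ℕ} (hm : 0 < m) (hmn : m ≤ n) :
    harmonic n - harmonic m ≤ log n - log m := by
  have := strictAnti_eulerMascheroniSeq'.antitone hmn
  simp only [eulerMascheroniSeq', hm.ne', (hm.trans_le hmn).ne', if_false] at this
  linarith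

lemma log_two_le_harmonic_sub_harmonic (m : ℕ) :
    log 2 ≤ harmonic (2 * m + 1) - harmonic m := by
  have := log_sub_log_le_harmonic_sub_harmonic (show m ≤ 2 * m + 1 by omega)
  rwa [show ((2 * m + 1 : ℕ) : ℝ) + 1 = 2 * (m + 1) by push_cast; ring,
    log_mul two_ne_zero (by positivity), add_sub_cancel_right] at this

lemma harmonic_sub_harmonic_le_log_two {m : ℕ} (hm : 0 < m) :
    harmonic (2 * m) - harmonic m ≤ log 2 := by
  have := harmonic_sub_harmonic_le_log_sub_log hm (show m ≤ 2 * m by omega)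
  rwa [Nat.cast_mul, Nat.cast_ofNat, log_mul two_ne_zero (by positivity),
    add_sub_cancel_right] at this

lemma abs_harmonic_sub_harmonic_half_sub_log_two_le {n : ℕ} (hn : 0 < n) :
    |(harmonic n - harmonic (n / 2) : ℝ) - log 2| ≤ 1 / (n + 1) := by
  rw [abs_le]
  obtain ⟨m, rfl | rfl⟩ := Nat.even_or_odd' n
  · have hlow := log_two_le_harmonic_sub_harmonic m
    have hup := harmonic_sub_harmonic_le_log_two (show 0 < m by omega)
    rw [harmonic_succ] at hlow
    simp only [Nat.mul_div_cancel_left m two_pos, one_div]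
    push_cast at *
    constructor <;> linarith
  · have hlow := log_two_le_harmonic_sub_harmonic m
    have hup := harmonic_sub_harmonic_le_log_two (show 0 < m + 1 by omega)
    rw [show 2 * (m + 1) = 2 * m + 1 + 1 by ring, harmonic_succ, harmonic_succ m] at hup
    rw [show (2 * m + 1) / 2 = m by omega, one_div]
    push_cast at *
    have hinv : ((m : ℝ) + 1)⁻¹ = 2 * (2 * (m : ℝ) + 1 + 1)⁻¹ := by field_simp; ring
    have hpos : (0 : ℝ) < (2 * (m : ℝ) + 1 + 1)⁻¹ := by positivity
    constructor <;> linarith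

lemma sum_Ioc_inv_eq_harmonic_sub_harmonic {m n : ℕ} (hmn : m ≤ n) :
    ∑ k ∈ Ioc m n, (k : ℝ)⁻¹ = harmonic n - harmonic m := by
  induction n, hmn using Nat.le_induction with
  | base => simp
  | succ n hmn ih =>
    rw [sum_Ioc_succ_top hmn, ih, harmonic_succ]
    push_cast
    ring

lemma sum_one_div_image_mul_Ioc {r m n : ℕ} (hr : 0 < r) (hmn : m ≤ n) :
    ∑ b ∈ (Ioc m n).image (r * ·), (1 : ℝ) / b = (harmonic n - harmonic m) / r := by
  rw [sum_image fun _ _ _ _ h => Nat.eq_of_mul_eq_mul_left hr h,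
    ← sum_Ioc_inv_eq_harmonic_sub_harmonic hmn, sum_div]
  refine sum_congr rfl fun k _ => ?_
  push_cast
  rw [one_div, mul_inv, inv_mul_eq_div]

lemma half_lt_natCast_iff {ℓ : ℝ} (hℓ : 0 ≤ ℓ) (b : ℕ) : ℓ / 2 < b ↔ ⌊ℓ⌋₊ / 2 < b := by
  rw [← Nat.floor_lt (by positivity), Nat.floor_div_ofNat]

lemma filter_Icc_half_lt_dvd_eq_image {N r : ℕ} (hr : 0 < r) :
    (Icc 1 N).filter (fun b => N / 2 < b ∧ r ∣ b) = (Ioc (N / r / 2) (N / r)).image (r * ·) := by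
  have half_lt_iff (k : ℕ) : N / 2 < r * k ↔ N / r / 2 < k := by
    rw [Nat.div_div_eq_div_mul, mul_comm r 2, ← Nat.div_div_eq_div_mul, Nat.div_lt_iff_lt_mul hr,
      mul_comm]
  have le_iff (k : ℕ) : r * k ≤ N ↔ k ≤ N / r := by
    rw [Nat.le_div_iff_mul_le hr, mul_comm]
  ext b
  simp only [mem_filter, mem_Icc, mem_image, mem_Ioc]
  constructor
  · rintro ⟨⟨-, hbN⟩, hb, k, rfl⟩
    exact ⟨k, ⟨(half_lt_iff k).1 hb, (le_iff k).1 hbN⟩, rfl⟩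
  · rintro ⟨k, ⟨hk, hkN⟩, rfl⟩
    exact ⟨⟨Nat.mul_pos hr (by omega), (le_iff k).2 hkN⟩, (half_lt_iff k).2 hk, dvd_mul_right r k⟩

theorem harmonic_like_sum_P (ℓ : ℝ) (r : ℕ) (hr : 1 ≤ r) (hrℓ : (r : ℝ) ≤ ℓ) :
    |(∑ b ∈ (Finset.Icc 1 ⌊ℓ⌋₊).filter (fun (b : ℕ) => ℓ / 2 < (b : ℝ) ∧ r ∣ b),
        (1 : ℝ) / b) - Real.log 2 / r| ≤ 1 / ℓ := by
  have hr₀ : (0 : ℝ) < r := by exact_mod_cast hr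
  have hℓ : 0 < ℓ := hr₀.trans_le hrℓ
  set n := ⌊ℓ⌋₊ / r with hn_def
  have hn : 0 < n := Nat.div_pos (Nat.le_floor hrℓ) hr
  have hℓn : ℓ ≤ (n + 1) * r := by
    have := Nat.lt_floor_add_one (ℓ / r)
    rw [Nat.floor_div_natCast, ← hn_def, div_lt_iff₀ hr₀] at this
    exact this.le
  rw [filter_congr fun b _ => by rw [half_lt_natCast_iff hℓ.le], filter_Icc_half_lt_dvd_eq_image hr,
    sum_one_div_image_mul_Ioc hr (Nat.div_le_self n 2), ← sub_div, abs_div, abs_of_pos hr₀,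
    div_le_iff₀ hr₀]
  calc _ ≤ 1 / ((n : ℝ) + 1) := abs_harmonic_sub_harmonic_half_sub_log_two_le hn
    _ ≤ 1 / ℓ * r := by
      rw [one_div_mul_eq_div, div_le_div_iff₀ (by positivity) hℓ]
      linarith
end

section
/- Let ℓ be a real number and r an odd integer with 1 ≤ r ≤ ℓ, and define P''(ℓ,r) = Σ 1/b, the sum over all odd integers b with ℓ/2 < b ≤ ℓ and r dividing b. Then |P''(ℓ,r) − ln(2)/(2r)| ≤ 2/ℓ. -/
/-!
Writing `b = r m`, the sum `P''(ℓ, r)` is `P''(ℓ / r, 1) / r`, so it suffices to treat `r = 1`,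
i.e. the sum of `1 / (2k + 1)` over the odd numbers `2k + 1` in `(L/2, L]`. By convexity of `1/x`,
each term is squeezed between `(log (2k + 3) - log (2k + 1)) / 2` and `(log (2k + 2) - log (2k)) / 2`;
both bounds telescope to `log 2 / 2` up to boundary terms of size `O(1 / L)`. In the upper bound the
first term, which is below `2 / L`, is split off; the remaining telescoped sum is then at most
`log 2 / 2` for every `L > 0`.
-/

open scoped Classical
open Finset Real

noncomputable def oddMultiplesIn (ℓ : ℝ) (r : ℕ) : Finset ℕ :=
  (Icc 1 ⌊ℓ⌋₊).filter (fun b : ℕ => ℓ / 2 < (b : ℝ) ∧ r ∣ b ∧ Odd b)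

noncomputable def P'' (ℓ : ℝ) (r : ℕ) : ℝ :=
  ∑ b ∈ oddMultiplesIn ℓ r, (1 : ℝ) / b

theorem mem_oddMultiplesIn {ℓ : ℝ} {r b : ℕ} :
    b ∈ oddMultiplesIn ℓ r ↔ ℓ / 2 < b ∧ (b : ℝ) ≤ ℓ ∧ r ∣ b ∧ Odd b := by
  unfold oddMultiplesIn
  constructor
  · intro hb
    obtain ⟨hb, hlt, hdvd, hodd⟩ := mem_filter.mp hb
    have hle := (mem_Icc.mp hb).2
    exact ⟨hlt, (Nat.le_floor_iff' hodd.pos.ne').mp hle, hdvd, hodd⟩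
  · rintro ⟨hlt, hle, hdvd, hodd⟩
    exact mem_filter.mpr
      ⟨mem_Icc.mpr ⟨hodd.pos, (Nat.le_floor_iff' hodd.pos.ne').mpr hle⟩, hlt, hdvd, hodd⟩

theorem oddMultiplesIn_eq_image {r : ℕ} (hr : Odd r) (ℓ : ℝ) :
    oddMultiplesIn ℓ r = (oddMultiplesIn (ℓ / r) 1).image (r * ·) := by
  have hr0 : (0 : ℝ) < r := by exact_mod_cast hr.pos
  ext b
  simp only [mem_image, mem_oddMultiplesIn, one_dvd, true_and]
  constructor
  · rintro ⟨hlt, hle, ⟨m, rfl⟩, hodd⟩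
    push_cast at hlt hle
    refine ⟨m, ⟨?_, ?_, (Nat.odd_mul.mp hodd).2⟩, rfl⟩
    · rw [div_div, div_lt_iff₀ (by positivity)]
      linarith
    · rw [le_div_iff₀ hr0]
      linarith
  · rintro ⟨m, ⟨hlt, hle, hodd⟩, rfl⟩
    rw [div_div, div_lt_iff₀ (by positivity)] at hlt
    rw [le_div_iff₀ hr0] at hle
    push_cast
    exact ⟨by linarith, by linarith, dvd_mul_right r m, Nat.odd_mul.mpr ⟨hr, hodd⟩⟩

theorem P''_eq_div {r : ℕ} (hr : Odd r) (ℓ : ℝ) : P'' ℓ r = P'' (ℓ / r) 1 / r := by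
  unfold P''
  rw [oddMultiplesIn_eq_image hr, sum_image fun _ _ _ _ h => Nat.eq_of_mul_eq_mul_left hr.pos h,
    sum_div]
  refine sum_congr rfl fun m _ => ?_
  push_cast
  rw [div_div, mul_comm]

theorem one_div_two_mul_add_one_le_log_sub_log {k : ℝ} (hk : 0 < k) :
    1 / (2 * k + 1) ≤ (log (k + 1) - log k) / 2 := by
  -- the first term of `log (1 + 1/k) = 2 ∑ (1/(2j+1)) (1/(2k+1))^(2j+1)`
  have h := le_hasSum (hasSum_log_one_add_inv hk) 0 fun j _ => by positivity
  rw [show 1 + k⁻¹ = (k + 1) / k by field_simp, log_div (by positivity) hk.ne'] at h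
  norm_num at h
  rw [one_div]
  linarith

theorem log_sub_log_le_one_div_two_mul_add_one {k : ℝ} (hk : 0 ≤ k) :
    (log (2 * k + 3) - log (2 * k + 1)) / 2 ≤ 1 / (2 * k + 1) := by
  have h := log_le_sub_one_of_pos (show 0 < (2 * k + 3) / (2 * k + 1) by positivity)
  rw [log_div (by positivity) (by positivity)] at h
  have : (2 * k + 3) / (2 * k + 1) - 1 = 2 * (1 / (2 * k + 1)) := by field_simp; ring
  rw [this] at h
  linarith

theorem sum_Ico_one_div_two_mul_add_one_le {k₀ K : ℕ} (hk₀ : 1 ≤ k₀) (hK : k₀ ≤ K) :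
    ∑ k ∈ Ico k₀ K, (1 : ℝ) / (2 * k + 1) ≤ (log K - log k₀) / 2 := by
  calc ∑ k ∈ Ico k₀ K, (1 : ℝ) / (2 * k + 1)
      ≤ ∑ k ∈ Ico k₀ K, (log ((k + 1 : ℕ) : ℝ) - log (k : ℝ)) / 2 := by
        refine sum_le_sum fun k hk => ?_
        have hk1 : (1 : ℝ) ≤ k := by exact_mod_cast hk₀.trans (mem_Ico.mp hk).1
        push_cast
        exact one_div_two_mul_add_one_le_log_sub_log (by linarith)
    _ = (log K - log k₀) / 2 := by
        rw [← sum_div, sum_Ico_sub (fun k : ℕ => log (k : ℝ)) hK]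

theorem le_sum_Ico_one_div_two_mul_add_one {k₀ K : ℕ} (hK : k₀ ≤ K) :
    (log (2 * K + 1) - log (2 * k₀ + 1)) / 2 ≤ ∑ k ∈ Ico k₀ K, (1 : ℝ) / (2 * k + 1) := by
  calc (log (2 * K + 1) - log (2 * k₀ + 1)) / 2
      = ∑ k ∈ Ico k₀ K, (log (2 * ((k + 1 : ℕ) : ℝ) + 1) - log (2 * (k : ℝ) + 1)) / 2 := by
        rw [← sum_div, sum_Ico_sub (fun k : ℕ => log (2 * (k : ℝ) + 1)) hK]
    _ ≤ ∑ k ∈ Ico k₀ K, (1 : ℝ) / (2 * k + 1) := by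
        refine sum_le_sum fun k _ => ?_
        push_cast
        rw [show 2 * ((k : ℝ) + 1) + 1 = 2 * k + 3 by ring]
        exact log_sub_log_le_one_div_two_mul_add_one (Nat.cast_nonneg k)

theorem oddMultiplesIn_one_eq_image (L : ℝ) :
    oddMultiplesIn L 1 = (Ico ((⌊L / 2⌋₊ + 1) / 2) ((⌊L⌋₊ + 1) / 2)).image (2 * · + 1) := by
  ext b
  simp only [mem_oddMultiplesIn, one_dvd, true_and, mem_image, mem_Ico]
  constructor
  · rintro ⟨hlt, hle, k, rfl⟩
    have hlt' := (Nat.floor_lt' (by omega)).mpr hlt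
    have hle' := (Nat.le_floor_iff' (by omega)).mpr hle
    exact ⟨k, ⟨by omega, by omega⟩, rfl⟩
  · rintro ⟨k, ⟨hk₀, hK⟩, rfl⟩
    refine ⟨(Nat.floor_lt' (by omega)).mp (by omega), (Nat.le_floor_iff' (by omega)).mp (by omega),
      odd_two_mul_add_one k⟩

theorem P''_one_eq_sum (L : ℝ) :
    P'' L 1 = ∑ k ∈ Ico ((⌊L / 2⌋₊ + 1) / 2) ((⌊L⌋₊ + 1) / 2), (1 : ℝ) / (2 * k + 1) := by
  unfold P''
  rw [oddMultiplesIn_one_eq_image, sum_image fun _ _ _ _ h => by omega]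
  push_cast
  rfl

theorem floor_le_two_mul_floor_half_add_one (L : ℝ) : ⌊L⌋₊ ≤ 2 * ⌊L / 2⌋₊ + 1 := by
  by_cases hL : 0 ≤ L
  · have h := Nat.lt_floor_add_one (L / 2)
    have : ⌊L⌋₊ < 2 * ⌊L / 2⌋₊ + 2 := (Nat.floor_lt hL).mpr (by push_cast; linarith)
    omega
  · simp [Nat.floor_of_nonpos (not_le.mp hL).le]

theorem P''_one_le {L : ℝ} (hL : 0 < L) : P'' L 1 ≤ log 2 / 2 + 2 / L := by
  rw [P''_one_eq_sum]
  set a := ⌊L / 2⌋₊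
  set n := ⌊L⌋₊
  rcases Nat.lt_or_ge ((a + 1) / 2) ((n + 1) / 2) with hlt | hge
  · rw [sum_eq_sum_Ico_succ_bot hlt]
    have hn := floor_le_two_mul_floor_half_add_one L
    have ha : L / 2 < a + 1 := Nat.lt_floor_add_one _
    have hfirst : 1 / (2 * (((a + 1) / 2 : ℕ) : ℝ) + 1) ≤ 2 / L := by
      have : (a : ℝ) + 1 ≤ 2 * (((a + 1) / 2 : ℕ) : ℝ) + 1 := by exact_mod_cast (by omega)
      rw [div_le_div_iff₀ (by positivity) hL]
      linarith
    have htail := sum_Ico_one_div_two_mul_add_one_le (Nat.le_add_left 1 ((a + 1) / 2)) hlt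
    have hlog : log (((n + 1) / 2 : ℕ) : ℝ) ≤ log 2 + log (((a + 1) / 2 + 1 : ℕ) : ℝ) := by
      rw [← log_mul two_ne_zero (by positivity)]
      exact log_le_log (by exact_mod_cast (by omega)) (by exact_mod_cast (by omega))
    linarith
  · rw [Ico_eq_empty_of_le hge, sum_empty]
    have := log_pos one_lt_two
    positivity

theorem le_P''_one {L : ℝ} (hL : 0 < L) : log 2 / 2 - 2 / L ≤ P'' L 1 := by
  rw [P''_one_eq_sum]
  set a := ⌊L / 2⌋₊
  set n := ⌊L⌋₊
  have hK : (a + 1) / 2 ≤ (n + 1) / 2 := by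
    have : a ≤ n := Nat.floor_le_floor (by linarith)
    omega
  have hsum := le_sum_Ico_one_div_two_mul_add_one hK
  have hupper : L ≤ 2 * (((n + 1) / 2 : ℕ) : ℝ) + 1 := by
    have h := Nat.lt_floor_add_one L
    have : (n : ℝ) + 1 ≤ 2 * (((n + 1) / 2 : ℕ) : ℝ) + 1 := by exact_mod_cast (by omega)
    linarith
  have hlower : 2 * (((a + 1) / 2 : ℕ) : ℝ) + 1 ≤ (L + 4) / 2 := by
    have h : (a : ℝ) ≤ L / 2 := Nat.floor_le (by positivity)
    have : 2 * (((a + 1) / 2 : ℕ) : ℝ) + 1 ≤ a + 2 := by exact_mod_cast (by omega)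
    linarith
  have hlog : log (L + 4) - log L ≤ 4 / L := by
    have h := log_le_sub_one_of_pos (show 0 < (L + 4) / L by positivity)
    rwa [log_div (by positivity) hL.ne', show (L + 4) / L - 1 = 4 / L by field_simp; ring] at h
  have h1 := log_le_log hL hupper
  have h2 := log_le_log (by positivity) hlower
  rw [log_div (by positivity) two_ne_zero] at h2
  have : 4 / L = 2 * (2 / L) := by ring
  linarith

theorem abs_P''_one_sub_le {L : ℝ} (hL : 0 < L) : |P'' L 1 - log 2 / 2| ≤ 2 / L :=
  abs_sub_le_iff.mpr ⟨by linarith [P''_one_le hL], by linarith [le_P''_one hL]⟩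

theorem harmonic_like_sum_P''_general (ℓ : ℝ) (r : ℕ) (hrodd : Odd r)
    (hrℓ : (r : ℝ) ≤ ℓ) :
    |(∑ b ∈ (Finset.Icc 1 ⌊ℓ⌋₊).filter
        (fun (b : ℕ) => ℓ / 2 < (b : ℝ) ∧ r ∣ b ∧ Odd b),
        (1 : ℝ) / b) - Real.log 2 / (2 * r)| ≤ 2 / ℓ := by
  have hr : (0 : ℝ) < r := by exact_mod_cast hrodd.pos
  have hℓ : 0 < ℓ := hr.trans_le hrℓ
  change |P'' ℓ r - log 2 / (2 * r)| ≤ 2 / ℓ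
  calc |P'' ℓ r - log 2 / (2 * r)| = |(P'' (ℓ / r) 1 - log 2 / 2) / r| := by
        rw [P''_eq_div hrodd]
        ring_nf
    _ = |P'' (ℓ / r) 1 - log 2 / 2| / r := by rw [abs_div, abs_of_pos hr]
    _ ≤ 2 / (ℓ / r) / r := by gcongr; exact abs_P''_one_sub_le (by positivity)
    _ = 2 / ℓ := by field_simp

theorem harmonic_like_sum_P'' (ℓ : ℝ) (r : ℕ) (hr : 1 ≤ r) (hrodd : Odd r)
    (hrℓ : (r : ℝ) ≤ ℓ) :
    |(∑ b ∈ (Finset.Icc 1 ⌊ℓ⌋₊).filter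
        (fun (b : ℕ) => ℓ / 2 < (b : ℝ) ∧ r ∣ b ∧ Odd b),
        (1 : ℝ) / b) - Real.log 2 / (2 * r)| ≤ 2 / ℓ :=
  harmonic_like_sum_P''_general ℓ r hrodd hrℓ
end

section
/- Let p be a real number with p ≥ 3 and let i, ℓ be positive integers with p^i ≤ ℓ < p^{i+1}. Let k₁, k₂ be positive real numbers and suppose f₀, f₁, …, f_i are real numbers satisfying k₁/p^j − k₂/ℓ ≤ f_j ≤ k₁/p^j + k₂/ℓ for every j ∈ {0,…,i}. Then for any real number t with t ≥ 1, (1 − 1/p^{t+i})·f_i + Σ_{j=0}^{i−1} (1 − 1/p^{t+j})·(f_j − f_{j+1}) < (1 − 1/(p^{t−1}(p+1)))·k₁ + k₂/ℓ. -/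
/-!
With `r = 1/p` and `s = 1/p^t` the weights are `w j = 1 - s r^j`, increasing in `j` and
nonnegative. Summation by parts rewrites the left-hand side as `w 0 f 0 + ∑ (w (j+1) - w j) f (j+1)`,
which is monotone in `f`, so it may be evaluated at the upper envelope `f j = k₁ r^j + k₂/ℓ`.
The constant part contributes `w i · k₂/ℓ ≤ k₂/ℓ`, and the geometric part has the closed form
`1 - (s + s r^(2i+1)) / (1 + r) < 1 - s/(1 + r) = 1 - 1/(p^(t-1) (p+1))`.
-/

open Finset

section WeightedTelescope

variable {R : Type*} [CommRing R]

def weightedTelescope (w g : ℕ → R) (n : ℕ) : R :=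
  w n * g n + ∑ j ∈ range n, w j * (g j - g (j + 1))

theorem weightedTelescope_eq_sum_by_parts (w g : ℕ → R) (n : ℕ) :
    weightedTelescope w g n = w 0 * g 0 + ∑ j ∈ range n, (w (j + 1) - w j) * g (j + 1) := by
  induction n with
  | zero => simp [weightedTelescope]
  | succ n ih =>
    simp only [weightedTelescope, sum_range_succ] at ih ⊢
    linear_combination ih

theorem weightedTelescope_affine (w g : ℕ → R) (a c : R) (n : ℕ) :
    weightedTelescope w (fun j => a * g j + c) n = a * weightedTelescope w g n + w n * c := by
  have hsum : ∑ j ∈ range n, w j * ((a * g j + c) - (a * g (j + 1) + c))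
      = a * ∑ j ∈ range n, w j * (g j - g (j + 1)) := by
    rw [mul_sum]
    exact sum_congr rfl fun j _ => by ring
  rw [weightedTelescope, weightedTelescope, hsum]
  ring

theorem weightedTelescope_geom (r s : R) (n : ℕ) :
    (1 + r) * weightedTelescope (fun j => 1 - s * r ^ j) (r ^ ·) n
      = 1 + r - s - s * r ^ (2 * n + 1) := by
  induction n with
  | zero => simp only [weightedTelescope, range_zero, sum_empty, pow_zero]; ring
  | succ n ih =>
    simp only [weightedTelescope, sum_range_succ] at ih ⊢
    linear_combination ih

end WeightedTelescope

section Ordered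

variable {R : Type*} [CommRing R] [PartialOrder R] [IsOrderedRing R]

theorem weightedTelescope_mono {w f g : ℕ → R} {n : ℕ} (hw₀ : 0 ≤ w 0) (hw : Monotone w)
    (hfg : ∀ j ≤ n, f j ≤ g j) : weightedTelescope w f n ≤ weightedTelescope w g n := by
  rw [weightedTelescope_eq_sum_by_parts, weightedTelescope_eq_sum_by_parts]
  exact add_le_add (mul_le_mul_of_nonneg_left (hfg 0 n.zero_le) hw₀) <| sum_le_sum fun j hj =>
    mul_le_mul_of_nonneg_left (hfg _ (mem_range.1 hj)) (sub_nonneg.2 (hw j.le_succ))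

end Ordered

section Field

variable {K : Type*} [Field K] [LinearOrder K] [IsStrictOrderedRing K]

theorem monotone_one_sub_mul_pow {r s : K} (hr₀ : 0 ≤ r) (hr₁ : r ≤ 1) (hs : 0 ≤ s) :
    Monotone fun j : ℕ => 1 - s * r ^ j :=
  monotone_nat_of_le_succ fun j =>
    sub_le_sub_left (mul_le_mul_of_nonneg_left (pow_le_pow_of_le_one hr₀ hr₁ j.le_succ) hs) 1

theorem weightedTelescope_geom_lt {r s : K} (hr : 0 < r) (hs : 0 < s) (n : ℕ) :
    weightedTelescope (fun j => 1 - s * r ^ j) (r ^ ·) n < 1 - s / (1 + r) := by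
  have h := weightedTelescope_geom r s n
  have hr₁ : 0 < 1 + r := by positivity
  have hpos : 0 < s * r ^ (2 * n + 1) := by positivity
  rw [lt_sub_iff_add_lt, ← mul_lt_mul_iff_right₀ hr₁, mul_add, h, mul_div_cancel₀ _ hr₁.ne']
  linarith

theorem weightedTelescope_lt_of_le_geom {r s k c : K} {f : ℕ → K} {n : ℕ}
    (hr : 0 < r) (hr₁ : r ≤ 1) (hs : 0 < s) (hs₁ : s ≤ 1) (hk : 0 < k) (hc : 0 ≤ c)
    (hf : ∀ j ≤ n, f j ≤ k * r ^ j + c) :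
    weightedTelescope (fun j => 1 - s * r ^ j) f n < k * (1 - s / (1 + r)) + c := by
  have hweight_le_one : 1 - s * r ^ n ≤ 1 := sub_le_self _ (by positivity)
  calc weightedTelescope (fun j => 1 - s * r ^ j) f n
      ≤ weightedTelescope (fun j => 1 - s * r ^ j) (fun j => k * r ^ j + c) n :=
        weightedTelescope_mono (by simpa using hs₁) (monotone_one_sub_mul_pow hr.le hr₁ hs.le) hf
    _ = k * weightedTelescope (fun j => 1 - s * r ^ j) (r ^ ·) n + (1 - s * r ^ n) * c :=
        weightedTelescope_affine _ _ _ _ _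
    _ < k * (1 - s / (1 + r)) + c :=
        add_lt_add_of_lt_of_le (mul_lt_mul_of_pos_left (weightedTelescope_geom_lt hr hs n) hk)
          (mul_le_of_le_one_left hc hweight_le_one)

end Field

theorem weighted_sum_upper_bound_general (p t k₁ k₂ : ℝ) (i ℓ : ℕ)
    (hp : 3 ≤ p) (ht : 1 ≤ t)
    (hk₁ : 0 < k₁) (hk₂ : 0 < k₂)
    (f : ℕ → ℝ)
    (hf : ∀ j ≤ i, k₁ / p ^ j - k₂ / ℓ ≤ f j ∧ f j ≤ k₁ / p ^ j + k₂ / ℓ) :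
    (1 - 1 / p ^ (t + (i : ℝ))) * f i
        + ∑ j ∈ Finset.range i, (1 - 1 / p ^ (t + (j : ℝ))) * (f j - f (j + 1))
      < (1 - 1 / (p ^ (t - 1) * (p + 1))) * k₁ + k₂ / ℓ := by
  have hp₀ : 0 < p := by linarith
  have hpt : 0 < p ^ t := Real.rpow_pos_of_pos hp₀ t
  have hweight (j : ℕ) : 1 - 1 / p ^ (t + (j : ℝ)) = 1 - (p ^ t)⁻¹ * p⁻¹ ^ j := by
    rw [Real.rpow_add hp₀, Real.rpow_natCast, one_div, mul_inv, inv_pow]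
  have hfactor : 1 / (p ^ (t - 1) * (p + 1)) = (p ^ t)⁻¹ / (1 + p⁻¹) := by
    rw [Real.rpow_sub_one hp₀.ne']
    field_simp
  have hupper (j : ℕ) (hj : j ≤ i) : f j ≤ k₁ * p⁻¹ ^ j + k₂ / ℓ := by
    simpa [div_eq_mul_inv, inv_pow] using (hf j hj).2
  calc (1 - 1 / p ^ (t + (i : ℝ))) * f i
        + ∑ j ∈ Finset.range i, (1 - 1 / p ^ (t + (j : ℝ))) * (f j - f (j + 1))
      = weightedTelescope (fun j => 1 - (p ^ t)⁻¹ * p⁻¹ ^ j) f i := by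
        simp only [hweight, weightedTelescope]
    _ < k₁ * (1 - (p ^ t)⁻¹ / (1 + p⁻¹)) + k₂ / ℓ :=
        weightedTelescope_lt_of_le_geom (inv_pos.2 hp₀) (inv_le_one_of_one_le₀ (by linarith))
          (inv_pos.2 hpt) (inv_le_one_of_one_le₀ (Real.one_le_rpow (by linarith) (by linarith)))
          hk₁ (by positivity) hupper
    _ = (1 - 1 / (p ^ (t - 1) * (p + 1))) * k₁ + k₂ / ℓ := by rw [hfactor]; ring

theorem weighted_sum_upper_bound (p t k₁ k₂ : ℝ) (i ℓ : ℕ)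
    (hp : 3 ≤ p) (ht : 1 ≤ t) (hi : 0 < i) (hℓ : 0 < ℓ)
    (hℓ1 : p ^ i ≤ (ℓ : ℝ)) (hℓ2 : (ℓ : ℝ) < p ^ (i + 1))
    (hk₁ : 0 < k₁) (hk₂ : 0 < k₂)
    (f : ℕ → ℝ)
    (hf : ∀ j ≤ i, k₁ / p ^ j - k₂ / ℓ ≤ f j ∧ f j ≤ k₁ / p ^ j + k₂ / ℓ) :
    (1 - 1 / p ^ (t + (i : ℝ))) * f i
        + ∑ j ∈ Finset.range i, (1 - 1 / p ^ (t + (j : ℝ))) * (f j - f (j + 1))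
      < (1 - 1 / (p ^ (t - 1) * (p + 1))) * k₁ + k₂ / ℓ :=
  weighted_sum_upper_bound_general p t k₁ k₂ i ℓ hp ht hk₁ hk₂ f hf
end

section
/- Let p be a real number with p ≥ 3 and let i, ℓ be positive integers with p^i ≤ ℓ < p^{i+1}. Let k₁, k₂ be positive real numbers and suppose f₀, f₁, …, f_i are real numbers satisfying k₁/p^j − k₂/ℓ ≤ f_j ≤ k₁/p^j + k₂/ℓ for every j ∈ {0,…,i}. Then for any integer n with n ≥ 9 and any real numbers q, t with q ≥ 2 and t ≥ 1, (1 − 1/p^{t+i} − 3/q^{n/4})·f_i + Σ_{j=0}^{i−1} (1 − 1/p^{t+j} − 3/q^{n/4})·(f_j − f_{j+1}) > (1 − 1/(p^{t−1}(p+1)))·k₁ − (k₂ + k₁/p^t)/ℓ − 3k₁/q^{n/4}. -/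
/-!
Write `r = 1/p`, `c = p^(-t)`, `A = 3/q^(n/4)`, so the weights are `W_j = 1 - A - c r^j`.
Summation by parts turns the left side into `W_0 f_0 + ∑_{j<i} (W_{j+1} - W_j) f_{j+1}`, and
all these coefficients are nonnegative (`c ≤ 1/3`, `A ≤ 2/3`, `W` increasing), so each `f_j` may
be replaced by its lower bound `k₁ r^j - k₂/ℓ`. The result is a geometric sum equal to
`(1 - A) k₁ - c k₁ (1 + r^(2i+1))/(1 + r) - (k₂/ℓ) W_i`; since `ℓ < p^(i+1)`, the term
`c k₁ r^(2i+1)/(1 + r)` is at most `c k₁/ℓ`, and `(k₂/ℓ) W_i < k₂/ℓ` gives strictness.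
-/

open Finset

theorem mul_add_sum_mul_sub_succ {R : Type*} [CommRing R] (W g : ℕ → R) (i : ℕ) :
    W i * g i + ∑ j ∈ range i, W j * (g j - g (j + 1)) =
      W 0 * g 0 + ∑ j ∈ range i, (W (j + 1) - W j) * g (j + 1) := by
  induction i with
  | zero => simp
  | succ i ih =>
    rw [sum_range_succ, sum_range_succ]
    linear_combination ih

theorem mul_add_sum_mul_sub_succ_mono {R : Type*} [CommRing R] [PartialOrder R]
    [IsOrderedRing R] {W g h : ℕ → R} {i : ℕ}
    (hW₀ : 0 ≤ W 0) (hW : ∀ j < i, W j ≤ W (j + 1)) (hgh : ∀ j ≤ i, h j ≤ g j) :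
    W i * h i + ∑ j ∈ range i, W j * (h j - h (j + 1)) ≤
      W i * g i + ∑ j ∈ range i, W j * (g j - g (j + 1)) := by
  rw [mul_add_sum_mul_sub_succ, mul_add_sum_mul_sub_succ]
  gcongr with j hj
  · exact hgh 0 i.zero_le
  · exact sub_nonneg.2 (hW j (mem_range.1 hj))
  · exact hgh (j + 1) (mem_range.1 hj)

theorem mul_add_sum_mul_sub_succ_geom {K : Type*} [Field K] (a c k e r : K) (hr : 1 + r ≠ 0)
    (i : ℕ) :
    (a - c * r ^ i) * (k * r ^ i - e)
        + ∑ j ∈ range i, (a - c * r ^ j) * ((k * r ^ j - e) - (k * r ^ (j + 1) - e)) =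
      a * k - c * k * (1 + r ^ (2 * i + 1)) / (1 + r) - e * (a - c * r ^ i) := by
  rw [mul_add_sum_mul_sub_succ (fun j ↦ a - c * r ^ j) (fun j ↦ k * r ^ j - e)]
  induction i with
  | zero => field_simp; ring
  | succ i ih =>
    rw [sum_range_succ, ← add_assoc, ih]
    field_simp
    ring

theorem bound_lt_geom_closed_form {c r A k k₂ L : ℝ} {i : ℕ} (hc : 0 < c) (hr₀ : 0 < r)
    (hr₁ : r ≤ 1) (hA : 0 ≤ A) (hk : 0 < k) (hk₂ : 0 < k₂) (hL : 0 < L)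
    (hLr : L * r ^ (i + 1) ≤ 1) :
    (1 - c / (1 + r)) * k - (k₂ + k * c) / L - A * k <
      (1 - A) * k - c * k * (1 + r ^ (2 * i + 1)) / (1 + r) - k₂ / L * (1 - A - c * r ^ i) := by
  have hr2i : L * r ^ (2 * i + 1) ≤ 1 :=
    calc L * r ^ (2 * i + 1) ≤ L * r ^ (i + 1) :=
          mul_le_mul_of_nonneg_left (pow_le_pow_of_le_one hr₀.le hr₁ (by omega)) hL.le
      _ ≤ 1 := hLr
  have htail : c * k * r ^ (2 * i + 1) / (1 + r) ≤ k * c / L := by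
    calc c * k * r ^ (2 * i + 1) / (1 + r) ≤ c * k * r ^ (2 * i + 1) :=
          div_le_self (by positivity) (by linarith)
      _ ≤ k * c / L := by rw [le_div_iff₀ hL]; nlinarith [mul_pos hc hk]
  have hslack : 0 < k₂ / L * (A + c * r ^ i) := by positivity
  have hsplit : c * k * (1 + r ^ (2 * i + 1)) / (1 + r) =
      c / (1 + r) * k + c * k * r ^ (2 * i + 1) / (1 + r) := by
    field_simp
  rw [hsplit, add_div]
  nlinarith

theorem three_div_rpow_le_two_thirds {q : ℝ} {n : ℕ} (hq : 2 ≤ q) (hn : 9 ≤ n) :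
    3 / q ^ ((n : ℝ) / 4) ≤ 2 / 3 := by
  have h₉ : (9 / 2 : ℝ) ≤ 2 ^ ((9 : ℝ) / 4) := by
    refine le_of_pow_le_pow_left₀ (n := 4) (by norm_num) (by positivity) ?_
    rw [← Real.rpow_natCast (2 ^ ((9 : ℝ) / 4)) 4, ← Real.rpow_mul zero_le_two]
    norm_num
  have hq₉ : (9 / 2 : ℝ) ≤ q ^ ((n : ℝ) / 4) :=
    calc (9 / 2 : ℝ) ≤ 2 ^ ((9 : ℝ) / 4) := h₉
      _ ≤ q ^ ((9 : ℝ) / 4) := by gcongr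
      _ ≤ q ^ ((n : ℝ) / 4) := by
        gcongr
        · linarith
        · exact_mod_cast hn
  rw [div_le_iff₀ (by linarith)]
  linarith

theorem one_div_rpow_add_natCast {p : ℝ} (hp : 0 < p) (t : ℝ) (j : ℕ) :
    1 / p ^ (t + (j : ℝ)) = 1 / p ^ t * (1 / p) ^ j := by
  rw [Real.rpow_add hp, Real.rpow_natCast, one_div_pow, div_mul_div_comm, one_mul]

theorem one_div_rpow_sub_one_mul_add_one {p : ℝ} (hp : 0 < p) (t : ℝ) :
    1 / (p ^ (t - 1) * (p + 1)) = 1 / p ^ t / (1 + 1 / p) := by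
  rw [Real.rpow_sub hp, Real.rpow_one]
  field_simp

theorem weighted_sum_lower_bound_general (p q t k₁ k₂ : ℝ) (i ℓ n : ℕ)
    (hp : 3 ≤ p) (hq : 2 ≤ q) (ht : 1 ≤ t) (hn : 9 ≤ n) (hℓ : 0 < ℓ)
    (hℓ2 : (ℓ : ℝ) < p ^ (i + 1))
    (hk₁ : 0 < k₁) (hk₂ : 0 < k₂)
    (f : ℕ → ℝ)
    (hf : ∀ j ≤ i, k₁ / p ^ j - k₂ / ℓ ≤ f j ∧ f j ≤ k₁ / p ^ j + k₂ / ℓ) :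
    (1 - 1 / p ^ (t + (i : ℝ)) - 3 / q ^ ((n : ℝ) / 4)) * f i
        + ∑ j ∈ Finset.range i,
            (1 - 1 / p ^ (t + (j : ℝ)) - 3 / q ^ ((n : ℝ) / 4)) * (f j - f (j + 1))
      > (1 - 1 / (p ^ (t - 1) * (p + 1))) * k₁ - (k₂ + k₁ / p ^ t) / ℓ
          - 3 * k₁ / q ^ ((n : ℝ) / 4) := by
  have hp₀ : 0 < p := by linarith
  have hL : (0 : ℝ) < ℓ := Nat.cast_pos.2 hℓ
  simp only [one_div_rpow_add_natCast hp₀, sub_right_comm (1 : ℝ) _ (3 / q ^ ((n : ℝ) / 4))]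
  rw [one_div_rpow_sub_one_mul_add_one hp₀, div_eq_mul_one_div k₁, mul_div_right_comm 3 k₁,
    gt_iff_lt]
  set r := 1 / p
  set c := 1 / p ^ t
  set A := 3 / q ^ ((n : ℝ) / 4)
  have hr₀ : 0 < r := by positivity
  have hr : r ≤ 1 / 3 := one_div_le_one_div_of_le (by norm_num) hp
  have hc₀ : 0 < c := by positivity
  have hc : c ≤ r := one_div_le_one_div_of_le hp₀ <| by
    simpa using Real.rpow_le_rpow_of_exponent_le (by linarith) ht
  have hA : A ≤ 2 / 3 := three_div_rpow_le_two_thirds hq hn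
  have hlower : ∀ j ≤ i, k₁ * r ^ j - k₂ / ℓ ≤ f j := fun j hj ↦ by
    simpa only [r, one_div_pow, mul_one_div] using (hf j hj).1
  have hLr : (ℓ : ℝ) * r ^ (i + 1) ≤ 1 := by
    rw [one_div_pow, mul_one_div, div_le_one (by positivity)]
    exact hℓ2.le
  have hmono : ∀ j : ℕ, 1 - A - c * r ^ j ≤ 1 - A - c * r ^ (j + 1) := fun j ↦
    sub_le_sub_left (mul_le_mul_of_nonneg_left
      (pow_le_pow_of_le_one hr₀.le (by linarith) j.le_succ) hc₀.le) _
  calc (1 - c / (1 + r)) * k₁ - (k₂ + k₁ * c) / ℓ - A * k₁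
      < (1 - A) * k₁ - c * k₁ * (1 + r ^ (2 * i + 1)) / (1 + r)
          - k₂ / ℓ * (1 - A - c * r ^ i) :=
        bound_lt_geom_closed_form hc₀ hr₀ (by linarith) (by positivity) hk₁ hk₂ hL hLr
    _ = _ := (mul_add_sum_mul_sub_succ_geom _ _ _ _ _ (by linarith) i).symm
    _ ≤ _ := mul_add_sum_mul_sub_succ_mono (W := fun j ↦ 1 - A - c * r ^ j)
          (h := fun j ↦ k₁ * r ^ j - k₂ / ℓ) (by linarith) (fun j _ ↦ hmono j) hlower

theorem weighted_sum_lower_bound (p q t k₁ k₂ : ℝ) (i ℓ n : ℕ)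
    (hp : 3 ≤ p) (hq : 2 ≤ q) (ht : 1 ≤ t) (hn : 9 ≤ n) (hi : 0 < i) (hℓ : 0 < ℓ)
    (hℓ1 : p ^ i ≤ (ℓ : ℝ)) (hℓ2 : (ℓ : ℝ) < p ^ (i + 1))
    (hk₁ : 0 < k₁) (hk₂ : 0 < k₂)
    (f : ℕ → ℝ)
    (hf : ∀ j ≤ i, k₁ / p ^ j - k₂ / ℓ ≤ f j ∧ f j ≤ k₁ / p ^ j + k₂ / ℓ) :
    (1 - 1 / p ^ (t + (i : ℝ)) - 3 / q ^ ((n : ℝ) / 4)) * f i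
        + ∑ j ∈ Finset.range i,
            (1 - 1 / p ^ (t + (j : ℝ)) - 3 / q ^ ((n : ℝ) / 4)) * (f j - f (j + 1))
      > (1 - 1 / (p ^ (t - 1) * (p + 1))) * k₁ - (k₂ + k₁ / p ^ t) / ℓ
          - 3 * k₁ / q ^ ((n : ℝ) / 4) :=
  weighted_sum_lower_bound_general p q t k₁ k₂ i ℓ n hp hq ht hn hℓ hℓ2 hk₁ hk₂ f hf
end
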